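/- Let u, v be twice differentiable at a point in ℝ², and suppose F ≥ F₀ > 0 at that point. Set P = (u_xx − u_yy)² + 4u_xy² and Q = (v_xx − v_yy)² + 4v_xy², and assume P, Q ≤ M² for some M > 0. Then |√(P + 4F) − √(Q + 4F)| ≤ ρ · √((u_xx − v_xx − (u_yy − v_yy))² + 4(u_xy − v_xy)²), where ρ = M/√(M² + 4F₀) < 1. -/
import Mathlib

private lemma aux_cs (x y u v : ℝ) :
    |x * u + y * v| ≤ Real.sqrt (x ^ 2 + y ^ 2) * Real.sqrt (u ^ 2 + v ^ 2) := by
  rw [← Real.sqrt_mul (by positivity), ← Real.sqrt_sq_eq_abs]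
  apply Real.sqrt_le_sqrt
  nlinarith [sq_nonneg (x * v - y * u)]

private lemma aux_tri (x y u v : ℝ) :
    Real.sqrt ((x + u) ^ 2 + (y + v) ^ 2) ≤
      Real.sqrt (x ^ 2 + y ^ 2) + Real.sqrt (u ^ 2 + v ^ 2) := by
  have h1 : x * u + y * v ≤ Real.sqrt (x ^ 2 + y ^ 2) * Real.sqrt (u ^ 2 + v ^ 2) :=
    le_trans (le_abs_self _) (aux_cs x y u v)
  have hx := Real.sq_sqrt (show (0:ℝ) ≤ x ^ 2 + y ^ 2 by positivity)
  have hu := Real.sq_sqrt (show (0:ℝ) ≤ u ^ 2 + v ^ 2 by positivity)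
  rw [show Real.sqrt (x ^ 2 + y ^ 2) + Real.sqrt (u ^ 2 + v ^ 2)
      = Real.sqrt ((Real.sqrt (x ^ 2 + y ^ 2) + Real.sqrt (u ^ 2 + v ^ 2)) ^ 2) from
      (Real.sqrt_sq (by positivity)).symm]
  apply Real.sqrt_le_sqrt
  nlinarith

/-- `√P ≤ (M/S) √(P+4F)` when `P ≤ M²`, `F₀ ≤ F`, `S = √(M²+4F₀)`. -/
private lemma aux_ratio (P F F₀ M : ℝ) (hP0 : 0 ≤ P) (hF₀ : 0 < F₀) (hF : F₀ ≤ F)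
    (hM : 0 < M) (hPM : P ≤ M ^ 2) :
    Real.sqrt P ≤ M / Real.sqrt (M ^ 2 + 4 * F₀) * Real.sqrt (P + 4 * F) := by
  have hSpos : 0 < Real.sqrt (M ^ 2 + 4 * F₀) := Real.sqrt_pos.mpr (by nlinarith)
  rw [div_mul_eq_mul_div, le_div_iff₀ hSpos]
  have h1 : Real.sqrt P * Real.sqrt (M ^ 2 + 4 * F₀)
      = Real.sqrt (P * (M ^ 2 + 4 * F₀)) := (Real.sqrt_mul hP0 _).symm
  have h2 : M * Real.sqrt (P + 4 * F) = Real.sqrt (M ^ 2 * (P + 4 * F)) := by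
    rw [Real.sqrt_mul (by positivity), Real.sqrt_sq hM.le]
  rw [h1, h2]
  apply Real.sqrt_le_sqrt
  nlinarith

/-- Quantitative contraction estimate underlying Theorem 2.5: with
`P = (u_xx − u_yy)² + 4u_xy²` and `Q = (v_xx − v_yy)² + 4v_xy²`, `P, Q ≤ M²`, `M > 0`
and `F ≥ F₀ > 0`, one has
`|√(P + 4F) − √(Q + 4F)| ≤ ρ √((u_xx − v_xx − (u_yy − v_yy))² + 4(u_xy − v_xy)²)`
with `ρ = M/√(M² + 4F₀) < 1`. -/
theorem stmt19 (uxx uyy uxy vxx vyy vxy F F₀ M P Q : ℝ)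
    (hF₀ : 0 < F₀) (hF : F₀ ≤ F) (hM : 0 < M)
    (hP : P = (uxx - uyy) ^ 2 + 4 * uxy ^ 2) (hQ : Q = (vxx - vyy) ^ 2 + 4 * vxy ^ 2)
    (hPM : P ≤ M ^ 2) (hQM : Q ≤ M ^ 2) :
    M / Real.sqrt (M ^ 2 + 4 * F₀) < 1 ∧
      |Real.sqrt (P + 4 * F) - Real.sqrt (Q + 4 * F)| ≤
        M / Real.sqrt (M ^ 2 + 4 * F₀) *
          Real.sqrt ((uxx - vxx - (uyy - vyy)) ^ 2 + 4 * (uxy - vxy) ^ 2) := by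
  have hSM : M < Real.sqrt (M ^ 2 + 4 * F₀) := by
    rw [show M = Real.sqrt (M ^ 2) from (Real.sqrt_sq hM.le).symm]
    · exact Real.sqrt_lt_sqrt (by positivity) (by nlinarith [Real.sq_sqrt (show (0:ℝ) ≤ M^2 by positivity), Real.sqrt_sq hM.le])
  have hSpos : 0 < Real.sqrt (M ^ 2 + 4 * F₀) := lt_trans hM hSM
  set ρ := M / Real.sqrt (M ^ 2 + 4 * F₀) with hρdef
  have hρ1 : ρ < 1 := (div_lt_one hSpos).mpr hSM
  refine ⟨hρ1, ?_⟩
  have hρ0 : 0 ≤ ρ := by positivity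
  have hP0 : 0 ≤ P := by rw [hP]; positivity
  have hQ0 : 0 ≤ Q := by rw [hQ]; positivity
  have ha : 0 < P + 4 * F := by nlinarith
  have hb : 0 < Q + 4 * F := by nlinarith
  set sa := Real.sqrt (P + 4 * F) with hsa
  set sb := Real.sqrt (Q + 4 * F) with hsb
  set E := Real.sqrt ((uxx - vxx - (uyy - vyy)) ^ 2 + 4 * (uxy - vxy) ^ 2) with hE
  have hE0 : 0 ≤ E := Real.sqrt_nonneg _
  have hsum : 0 < sa + sb := by
    have := Real.sqrt_pos.mpr ha
    have := Real.sqrt_nonneg (Q + 4 * F)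
    rw [hsa, hsb]; linarith
  -- key pointwise ratio bounds
  have kP : Real.sqrt P ≤ ρ * sa := aux_ratio P F F₀ M hP0 hF₀ hF hM hPM
  have kQ : Real.sqrt Q ≤ ρ * sb := aux_ratio Q F F₀ M hQ0 hF₀ hF hM hQM
  -- Cauchy-Schwarz step: |P - Q| ≤ E * (√P + √Q)
  have hcs : |P - Q| ≤ E * (Real.sqrt P + Real.sqrt Q) := by
    have h1 : |((uxx - uyy) - (vxx - vyy)) * ((uxx - uyy) + (vxx - vyy)) +
        (2 * uxy - 2 * vxy) * (2 * uxy + 2 * vxy)| ≤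
        Real.sqrt (((uxx - uyy) - (vxx - vyy)) ^ 2 + (2 * uxy - 2 * vxy) ^ 2) *
        Real.sqrt (((uxx - uyy) + (vxx - vyy)) ^ 2 + (2 * uxy + 2 * vxy) ^ 2) :=
      aux_cs _ _ _ _
    have h2 : Real.sqrt (((uxx - uyy) + (vxx - vyy)) ^ 2 + (2 * uxy + 2 * vxy) ^ 2) ≤
        Real.sqrt ((uxx - uyy) ^ 2 + (2 * uxy) ^ 2) +
        Real.sqrt ((vxx - vyy) ^ 2 + (2 * vxy) ^ 2) := aux_tri _ _ _ _
    have e1 : (uxx - uyy) ^ 2 + (2 * uxy) ^ 2 = P := by rw [hP]; ring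
    have e2 : (vxx - vyy) ^ 2 + (2 * vxy) ^ 2 = Q := by rw [hQ]; ring
    have e3 : ((uxx - uyy) - (vxx - vyy)) ^ 2 + (2 * uxy - 2 * vxy) ^ 2
        = (uxx - vxx - (uyy - vyy)) ^ 2 + 4 * (uxy - vxy) ^ 2 := by ring
    have e4 : ((uxx - uyy) - (vxx - vyy)) * ((uxx - uyy) + (vxx - vyy)) +
        (2 * uxy - 2 * vxy) * (2 * uxy + 2 * vxy) = P - Q := by rw [hP, hQ]; ring
    rw [e1, e2] at h2
    rw [e3, e4, ← hE] at h1
    calc |P - Q| ≤ E * Real.sqrt (((uxx - uyy) + (vxx - vyy)) ^ 2 + (2 * uxy + 2 * vxy) ^ 2) := h1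
      _ ≤ E * (Real.sqrt P + Real.sqrt Q) := by
          exact mul_le_mul_of_nonneg_left h2 hE0
  -- combine
  have hmul : |sa - sb| * (sa + sb) ≤ ρ * E * (sa + sb) := by
    have hab : (sa - sb) * (sa + sb) = (P + 4 * F) - (Q + 4 * F) := by
      have h1 := Real.sq_sqrt ha.le
      have h2 := Real.sq_sqrt hb.le
      rw [hsa, hsb]; nlinarith
    have : |sa - sb| * (sa + sb) = |P - Q| := by
      rw [← abs_of_pos hsum, ← abs_mul, hab]
      congr 1; ring
    rw [this]
    calc |P - Q| ≤ E * (Real.sqrt P + Real.sqrt Q) := hcs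
      _ ≤ E * (ρ * sa + ρ * sb) := by
          apply mul_le_mul_of_nonneg_left (by linarith) hE0
      _ = ρ * E * (sa + sb) := by ring
  exact le_of_mul_le_mul_right hmul hsum
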